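/- Let σ = (s_x, s_α, h) be a SeqSL model and φ1, φ2 PSeqSL formulas, φ = φ1 -* φ2. Let L = FV_x(φ1) ∪ FV_x(φ2), let B be the first max(sz(φ1), sz(φ2)) locations of Loc ∖ (dom(h) ∪ s_x(L)), let β̄ be a fresh sequence variable and s_α' an extension of s_α assigning to β̄ a sequence different from the value under (s_x,s_α',h) of every sequence term occurring in SeqTerms(φ), and set σ' = (s_x, s_α', h), D = B ∪ s_x(L), and R = { value of t_α under σ' : t_α ∈ SeqTerms(φ) } ∪ { ε, s_α'(β̄) }. Then (s_x,s_α,h) ⊨ φ1 -* φ2 if and only if: for every heap h' such that dom(h') ∩ dom(h) = ∅, (s_x,s_α',h') ⊨ φ1, dom(h') ⊆ D, and rng(h') ⊆ R, it holds that (s_x,s_α',h ⊎ h') ⊨ φ2. -/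

import Mathlib

/-! Common framework for sequence-heap separation logic (SeqSL / PSeqSL).

Values: `Sum.inl n` is an element of `Loc ∪ Val = ℕ` (locations are the
naturals), `Sum.inr` is one of the two atoms `nil` and `#`.  A heap is a
finite partial map from locations to finite sequences of values. -/

inductive SAtom : Type
  | anil : SAtom
  | ahash : SAtom
deriving DecidableEq

abbrev SVal : Type := ℕ ⊕ SAtom

abbrev Word : Type := List SVal

abbrev Heap : Type := Finmap fun _ : ℕ => Word

/-- Program-variable terms: `nil`, `#`, or a program variable. -/
inductive PTerm : Type
  | nil : PTerm
  | hash : PTerm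
  | pvar : ℕ → PTerm
deriving DecidableEq

/-- Sequence terms: `ε`, an individual term, a sequence variable, or a
concatenation. -/
inductive STerm : Type
  | eps : STerm
  | atom : PTerm → STerm
  | svar : ℕ → STerm
  | conc : STerm → STerm → STerm
deriving DecidableEq

/-- PSeqSL formulas. -/
inductive PFormula : Type
  | eqx : PTerm → PTerm → PFormula
  | eqs : STerm → STerm → PFormula
  | fls : PFormula
  | imp : PFormula → PFormula → PFormula
  | emp : PFormula
  | pto : ℕ → STerm → PFormula
  | star : PFormula → PFormula → PFormula
  | wand : PFormula → PFormula → PFormula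
deriving DecidableEq

def PTerm.eval (sx : ℕ → SVal) : PTerm → SVal
  | .nil => Sum.inr SAtom.anil
  | .hash => Sum.inr SAtom.ahash
  | .pvar x => sx x

def STerm.eval (sx : ℕ → SVal) (sa : ℕ → Word) : STerm → Word
  | .eps => []
  | .atom t => [t.eval sx]
  | .svar a => sa a
  | .conc t₁ t₂ => t₁.eval sx sa ++ t₂.eval sx sa

/-- Satisfaction of PSeqSL formulas. -/
def PFormula.Sat (sx : ℕ → SVal) (sa : ℕ → Word) : PFormula → Heap → Prop
  | .eqx t₁ t₂, _ => t₁.eval sx = t₂.eval sx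
  | .eqs t₁ t₂, _ => t₁.eval sx sa = t₂.eval sx sa
  | .fls, _ => False
  | .imp φ₁ φ₂, h => PFormula.Sat sx sa φ₁ h → PFormula.Sat sx sa φ₂ h
  | .emp, h => h = ∅
  | .pto x t, h => ∃ l : ℕ, sx x = Sum.inl l ∧ h = Finmap.singleton l (t.eval sx sa)
  | .star φ₁ φ₂, h => ∃ h₁ h₂ : Heap, h₁.Disjoint h₂ ∧ h = h₁ ∪ h₂ ∧
      PFormula.Sat sx sa φ₁ h₁ ∧ PFormula.Sat sx sa φ₂ h₂
  | .wand φ₁ φ₂, h => ∀ h₁ : Heap, h₁.Disjoint h → PFormula.Sat sx sa φ₁ h₁ →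
      PFormula.Sat sx sa φ₂ (h₁ ∪ h)

/-- Free program variables of a program-variable term. -/
def PTerm.fv : PTerm → Finset ℕ
  | .pvar x => {x}
  | _ => ∅

/-- Free program variables of a sequence term. -/
def STerm.fvx : STerm → Finset ℕ
  | .eps => ∅
  | .atom t => t.fv
  | .svar _ => ∅
  | .conc t₁ t₂ => t₁.fvx ∪ t₂.fvx

/-- Free program variables of a PSeqSL formula. -/
def PFormula.fvx : PFormula → Finset ℕ
  | .eqx t₁ t₂ => t₁.fv ∪ t₂.fv
  | .eqs t₁ t₂ => t₁.fvx ∪ t₂.fvx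
  | .fls => ∅
  | .imp φ₁ φ₂ => φ₁.fvx ∪ φ₂.fvx
  | .emp => ∅
  | .pto x t => {x} ∪ t.fvx
  | .star φ₁ φ₂ => φ₁.fvx ∪ φ₂.fvx
  | .wand φ₁ φ₂ => φ₁.fvx ∪ φ₂.fvx

/-- Free sequence variables of a sequence term. -/
def STerm.fva : STerm → Finset ℕ
  | .eps => ∅
  | .atom _ => ∅
  | .svar a => {a}
  | .conc t₁ t₂ => t₁.fva ∪ t₂.fva

/-- Free sequence variables of a PSeqSL formula. -/
def PFormula.fva : PFormula → Finset ℕ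
  | .eqx _ _ => ∅
  | .eqs t₁ t₂ => t₁.fva ∪ t₂.fva
  | .fls => ∅
  | .imp φ₁ φ₂ => φ₁.fva ∪ φ₂.fva
  | .emp => ∅
  | .pto _ t => t.fva
  | .star φ₁ φ₂ => φ₁.fva ∪ φ₂.fva
  | .wand φ₁ φ₂ => φ₁.fva ∪ φ₂.fva

/-- Size of a PSeqSL formula. -/
def PFormula.sz : PFormula → ℕ
  | .eqx _ _ => 0
  | .eqs _ _ => 0
  | .fls => 0
  | .imp φ₁ φ₂ => max φ₁.sz φ₂.sz
  | .emp => 1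
  | .pto _ _ => 1
  | .star φ₁ φ₂ => φ₁.sz + φ₂.sz
  | .wand _ φ₂ => φ₂.sz

/-- The set of sequence terms (including program-variable terms) occurring in
a PSeqSL formula. -/
def PFormula.seqTerms : PFormula → Finset STerm
  | .eqx t₁ t₂ => {STerm.atom t₁, STerm.atom t₂}
  | .eqs t₁ t₂ => {t₁, t₂}
  | .fls => ∅
  | .imp φ₁ φ₂ => φ₁.seqTerms ∪ φ₂.seqTerms
  | .emp => ∅
  | .pto x t => {STerm.atom (PTerm.pvar x), t}
  | .star φ₁ φ₂ => φ₁.seqTerms ∪ φ₂.seqTerms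
  | .wand φ₁ φ₂ => φ₁.seqTerms ∪ φ₂.seqTerms

/-- The first `k` elements of a set `S ⊆ ℕ`. -/
def firstN (S : Set ℕ) (k : ℕ) : Set ℕ :=
  {l | l ∈ S ∧ Set.ncard {l' ∈ S | l' < l} < k}


/-! A formula `φ` whose program variables denote locations in a finite set `N` and whose terms
denote words in a set `V` sees a heap only through `HeapEquiv N V φ.sz`: the cells at `N`, with
all words outside `V` identified, and the number of the other (anonymous) cells, counted up to
`sz φ`. This is proved by induction on `φ`: for `*` the anonymous count splits between the two
parts, and for `-*` the anonymous cells of an extension can be moved to fresh locations.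

For the theorem, take an extension `h₁` of `h` satisfying `φ₁`. Keeping the named cells of `h₁`,
replacing every content outside `V` by the fresh word `w`, and putting `min (max (sz φ₁) (sz φ₂))
#anon` anonymous cells at the first free locations gives a heap of the small model that is
equivalent to `h₁` at threshold `max (sz φ₁) (sz φ₂)`; so it satisfies `φ₁`, and `φ₂` transfers
back from it to `h₁ ∪ h`. -/

open Finset

theorem List.dlookup_map_sigmaMk {α β : Type*} [DecidableEq α] (f : α → β) (L : List α)
    (a : α) :
    (L.map fun l => (⟨l, f l⟩ : Σ _ : α, β)).dlookup a = if a ∈ L then some (f a) else none := by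
  induction L with
  | nil => simp
  | cons b L ih =>
    by_cases hab : a = b
    · subst hab
      simp [List.dlookup_cons_eq]
    · rw [List.map_cons, List.dlookup_cons_ne _ _ hab, ih]
      simp [hab]

theorem Option.rel_refl_of_refl {α : Type*} {r : α → α → Prop} (hr : ∀ a, r a a) :
    ∀ o : Option α, Option.Rel r o o
  | none => .none
  | some a => .some (hr a)

theorem Option.Rel.symm_of {α : Type*} {r : α → α → Prop} {o₁ o₂ : Option α}
    (h : Option.Rel r o₁ o₂) (hr : ∀ a b, r a b → r b a) : Option.Rel r o₂ o₁ := by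
  cases h with
  | some hab => exact .some (hr _ _ hab)
  | none => exact .none

theorem Option.Rel.isSome_eq {α β : Type*} {r : α → β → Prop} {o₁ : Option α} {o₂ : Option β}
    (h : Option.Rel r o₁ o₂) : o₁.isSome = o₂.isSome := by
  cases h <;> rfl

theorem Nat.exists_add_eq_of_min_add_eq {p q a b c : ℕ}
    (h : min (p + q) (a + b) = min (p + q) c) :
    ∃ a' b', a' + b' = c ∧ min p a = min p a' ∧ min q b = min q b' := by
  refine ⟨if a + b < p + q then a else if b < q then c - b else min a p,
    c - (if a + b < p + q then a else if b < q then c - b else min a p), ?_, ?_, ?_⟩ <;>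
    split_ifs <;> omega

theorem Finset.exists_disjoint_card_eq {α : Type*} [Infinite α] (X : Finset α) (n : ℕ) :
    ∃ A : Finset α, Disjoint A X ∧ A.card = n := by
  obtain ⟨A, hA, hcard⟩ := X.finite_toSet.infinite_compl.exists_subset_card_eq n
  exact ⟨A, disjoint_left.2 fun _ hl => hA hl, hcard⟩

theorem nth_mem_firstN {S : Set ℕ} [DecidablePred (· ∈ S)] (hS : S.Infinite) {i k : ℕ}
    (hi : i < k) : Nat.nth (· ∈ S) i ∈ firstN S k := by
  refine ⟨Nat.nth_mem_of_infinite hS i, ?_⟩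
  have hbelow : {l ∈ S | l < Nat.nth (· ∈ S) i} =
      ↑((range (Nat.nth (· ∈ S) i)).filter (· ∈ S)) := by
    ext
    simp [and_comm]
  rw [hbelow, Set.ncard_coe_finset, ← Nat.count_eq_card_filter_range,
    Nat.count_nth_of_infinite (p := (· ∈ S)) hS]
  exact hi

theorem exists_finset_subset_firstN {S : Set ℕ} (hS : S.Infinite) {m k : ℕ} (hmk : m ≤ k) :
    ∃ F : Finset ℕ, F.card = m ∧ ↑F ⊆ firstN S k := by
  classical
  refine ⟨(range m).image (Nat.nth (· ∈ S)), ?_, ?_⟩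
  · rw [card_image_of_injective _ (Nat.nth_injective (p := (· ∈ S)) hS), card_range]
  · rw [coe_image, coe_range, Set.image_subset_iff]
    exact fun i hi => nth_mem_firstN hS (lt_of_lt_of_le hi hmk)

namespace Heap

def ofFun (s : Finset ℕ) (f : ℕ → Word) : Heap :=
  ((s.sort (· ≤ ·)).map fun l => (⟨l, f l⟩ : Σ _ : ℕ, Word)).toFinmap

theorem lookup_ofFun (s : Finset ℕ) (f : ℕ → Word) (l : ℕ) :
    (ofFun s f).lookup l = if l ∈ s then some (f l) else none := by
  simp [ofFun, Finmap.dlookup_list_toFinmap, List.dlookup_map_sigmaMk]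

theorem keys_ofFun (s : Finset ℕ) (f : ℕ → Word) : (ofFun s f).keys = s := by
  ext l
  by_cases hl : l ∈ s <;> simp [Finmap.mem_keys, Finmap.mem_iff, lookup_ofFun, hl]

def restrict (h : Heap) (p : ℕ → Prop) [DecidablePred p] : Heap :=
  ofFun (h.keys.filter p) fun l => (h.lookup l).getD []

/-- Keep the cells of `h` at the locations in `N`, with contents transformed by `f`, and replace
all other cells by cells at the locations in `A`. -/
def relocate (h : Heap) (N A : Finset ℕ) (f : Word → Word) : Heap :=
  ofFun (h.keys ∩ N ∪ A) fun l => f ((h.lookup l).getD [])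

variable (h : Heap)

theorem lookup_restrict (p : ℕ → Prop) [DecidablePred p] (l : ℕ) :
    (h.restrict p).lookup l = if p l then h.lookup l else none := by
  rw [restrict, lookup_ofFun]
  by_cases hp : p l <;> cases hl : h.lookup l <;>
    simp [hp, hl, Finmap.mem_keys, ← Finmap.lookup_isSome]

theorem keys_restrict (p : ℕ → Prop) [DecidablePred p] :
    (h.restrict p).keys = h.keys.filter p :=
  keys_ofFun _ _

theorem keys_restrict_sdiff (p : ℕ → Prop) [DecidablePred p] (N : Finset ℕ) :
    (h.restrict p).keys \ N = (h.keys \ N).filter p := by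
  ext l
  simp only [keys_restrict, mem_sdiff, mem_filter]
  tauto

theorem restrict_union_restrict_not (p : ℕ → Prop) [DecidablePred p] :
    h.restrict p ∪ h.restrict (¬ p ·) = h := by
  refine Finmap.ext_lookup fun l => ?_
  by_cases hp : p l
  · rw [Finmap.lookup_union_left_of_not_in, lookup_restrict, if_pos hp]
    rw [← Finmap.mem_keys, keys_restrict, mem_filter]
    exact fun hl => hl.2 hp
  · rw [Finmap.lookup_union_right, lookup_restrict, if_pos hp]
    rw [← Finmap.mem_keys, keys_restrict, mem_filter]
    exact fun hl => hp hl.2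

theorem keys_relocate (N A : Finset ℕ) (f : Word → Word) :
    (h.relocate N A f).keys = h.keys ∩ N ∪ A :=
  keys_ofFun _ _

theorem lookup_relocate_of_mem {N A : Finset ℕ} (f : Word → Word) {l : ℕ} (hN : l ∈ N)
    (hA : l ∉ A) : (h.relocate N A f).lookup l = (h.lookup l).map f := by
  rw [relocate, lookup_ofFun]
  cases hl : h.lookup l <;> simp [hl, hN, hA, Finmap.mem_keys, ← Finmap.lookup_isSome]

theorem exists_eq_of_lookup_relocate {N A : Finset ℕ} {f : Word → Word} {l : ℕ} {v : Word}
    (hl : (h.relocate N A f).lookup l = some v) : ∃ u, f u = v := by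
  rw [relocate, lookup_ofFun] at hl
  split_ifs at hl
  exact ⟨_, Option.some_injective _ hl⟩

theorem card_keys_union_sdiff {h₁ h₂ : Heap} (hd : h₁.Disjoint h₂) (N : Finset ℕ) :
    ((h₁ ∪ h₂).keys \ N).card = (h₁.keys \ N).card + (h₂.keys \ N).card := by
  rw [Finmap.keys_union, union_sdiff_distrib, card_union_of_disjoint]
  exact disjoint_left.2 fun l h₁l h₂l =>
    hd l (Finmap.mem_keys.1 (mem_sdiff.1 h₁l).1) (Finmap.mem_keys.1 (mem_sdiff.1 h₂l).1)

end Heap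

def WordEquiv (V : Set Word) (v₁ v₂ : Word) : Prop :=
  v₁ = v₂ ∨ v₁ ∉ V ∧ v₂ ∉ V

namespace WordEquiv

variable {V : Set Word}

theorem refl (v : Word) : WordEquiv V v v :=
  Or.inl rfl

theorem symm {v₁ v₂ : Word} (h : WordEquiv V v₁ v₂) : WordEquiv V v₂ v₁ :=
  h.imp Eq.symm And.symm

theorem eq_of_mem {v₁ v₂ : Word} (h : WordEquiv V v₁ v₂) (hv : v₁ ∈ V) : v₁ = v₂ :=
  h.resolve_right fun h' => h'.1 hv

end WordEquiv

def HeapEquiv (N : Finset ℕ) (V : Set Word) (n : ℕ) (h₁ h₂ : Heap) : Prop :=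
  (∀ l ∈ N, Option.Rel (WordEquiv V) (h₁.lookup l) (h₂.lookup l)) ∧
    min n (h₁.keys \ N).card = min n (h₂.keys \ N).card

theorem heapEquiv_relocate {N : Finset ℕ} {V : Set Word} {n : ℕ} (h : Heap) {A : Finset ℕ}
    {f : Word → Word} (hA : Disjoint A N) (hf : ∀ v, WordEquiv V v (f v))
    (hcard : min n (h.keys \ N).card = min n A.card) : HeapEquiv N V n h (h.relocate N A f) := by
  refine ⟨fun l hl => ?_, ?_⟩
  · rw [h.lookup_relocate_of_mem f hl (disjoint_right.1 hA hl)]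
    cases h.lookup l
    · exact .none
    · exact .some (hf _)
  · have hanon : (h.relocate N A f).keys \ N = A := by
      ext l
      have := @disjoint_left.1 hA l
      simp only [Heap.keys_relocate, mem_sdiff, mem_union, mem_inter]
      tauto
    rw [hanon, hcard]

namespace HeapEquiv

variable {N : Finset ℕ} {V : Set Word} {n : ℕ} {h₁ h₂ : Heap}

theorem refl (n : ℕ) (h : Heap) : HeapEquiv N V n h h :=
  ⟨fun _ _ => Option.rel_refl_of_refl WordEquiv.refl _, rfl⟩

theorem symm (he : HeapEquiv N V n h₁ h₂) : HeapEquiv N V n h₂ h₁ :=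
  ⟨fun l hl => (he.1 l hl).symm_of fun _ _ => WordEquiv.symm, he.2.symm⟩

theorem mono {m : ℕ} (hmn : m ≤ n) (he : HeapEquiv N V n h₁ h₂) : HeapEquiv N V m h₁ h₂ :=
  ⟨he.1, by have := he.2; omega⟩

theorem mem_iff (he : HeapEquiv N V n h₁ h₂) {l : ℕ} (hl : l ∈ N) : l ∈ h₁ ↔ l ∈ h₂ := by
  rw [← Finmap.lookup_isSome, ← Finmap.lookup_isSome, (he.1 l hl).isSome_eq]

theorem union {g₁ g₂ : Heap} (hd₁ : g₁.Disjoint h₁) (hd₂ : g₂.Disjoint h₂)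
    (hg : HeapEquiv N V n g₁ g₂) (he : HeapEquiv N V n h₁ h₂) :
    HeapEquiv N V n (g₁ ∪ h₁) (g₂ ∪ h₂) := by
  refine ⟨fun l hl => ?_, ?_⟩
  · by_cases hg₁ : l ∈ g₁
    · rw [Finmap.lookup_union_left hg₁, Finmap.lookup_union_left ((hg.mem_iff hl).1 hg₁)]
      exact hg.1 l hl
    · rw [Finmap.lookup_union_right hg₁, Finmap.lookup_union_right (mt (hg.mem_iff hl).2 hg₁)]
      exact he.1 l hl
  · rw [Heap.card_keys_union_sdiff hd₁, Heap.card_keys_union_sdiff hd₂]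
    have := hg.2
    have := he.2
    omega

theorem eq_of_keys_subset (he : HeapEquiv N V 1 h₁ h₂) (hk : h₁.keys ⊆ N)
    (hV : ∀ l v, h₁.lookup l = some v → v ∈ V) : h₂ = h₁ := by
  have hanon : h₂.keys \ N = ∅ := by
    have := he.2
    rw [sdiff_eq_empty_iff_subset.2 hk, card_empty] at this
    exact card_eq_zero.1 (by omega)
  refine Finmap.ext_lookup fun l => ?_
  by_cases hl : l ∈ N
  · have hrel := he.1 l hl
    have hv := hV l
    revert hrel hv
    cases h₁.lookup l <;> cases h₂.lookup l <;> simp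
    exact fun hw hv => (hw.eq_of_mem hv).symm
  · have hl₁ : l ∉ h₁ := fun hl₁ => hl (hk (Finmap.mem_keys.2 hl₁))
    have hl₂ : l ∉ h₂ := fun hl₂ => by
      simpa [hanon] using mem_sdiff.2 ⟨Finmap.mem_keys.2 hl₂, hl⟩
    rw [Finmap.lookup_eq_none.2 hl₁, Finmap.lookup_eq_none.2 hl₂]

theorem rel_lookup_restrict {g g' : Heap}
    (hrel : ∀ l ∈ N, Option.Rel (WordEquiv V) ((g ∪ g').lookup l) (h₂.lookup l))
    {p : ℕ → Prop} [DecidablePred p] (hp : ∀ l ∈ N, l ∈ g → p l)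
    (hp' : ∀ l ∈ N, l ∈ g' → ¬ p l) :
    ∀ l ∈ N, Option.Rel (WordEquiv V) (g.lookup l) ((h₂.restrict p).lookup l) := by
  intro l hl
  rw [Heap.lookup_restrict]
  by_cases hlg : l ∈ g
  · simpa [if_pos (hp l hl hlg), Finmap.lookup_union_left hlg] using hrel l hl
  by_cases hlg' : l ∈ g'
  · rw [if_neg (hp' l hl hlg'), Finmap.lookup_eq_none.2 hlg]
    exact .none
  · have hnone : h₂.lookup l = none := by
      rw [Finmap.lookup_eq_none, ← Finmap.lookup_isSome, ← (hrel l hl).isSome_eq]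
      simp [Finmap.lookup_union_right hlg, Finmap.lookup_eq_none.2 hlg']
    rw [hnone, Finmap.lookup_eq_none.2 hlg, ite_self]
    exact .none

theorem exists_split {p q : ℕ} {ha hb : Heap} (hd : ha.Disjoint hb)
    (he : HeapEquiv N V (p + q) (ha ∪ hb) h₂) :
    ∃ h₂a h₂b : Heap, h₂a.Disjoint h₂b ∧ h₂ = h₂a ∪ h₂b ∧
      HeapEquiv N V p ha h₂a ∧ HeapEquiv N V q hb h₂b := by
  have hcount := he.2
  rw [Heap.card_keys_union_sdiff hd] at hcount
  obtain ⟨a, b, hab, hpa, hqb⟩ := Nat.exists_add_eq_of_min_add_eq hcount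
  obtain ⟨A, hA, hAcard⟩ := exists_subset_card_eq (s := h₂.keys \ N) (n := a) (by omega)
  -- `h₂a` takes the cells of `h₂` at the named locations of `ha` and `a` anonymous ones.
  set S := ha.keys ∩ N ∪ A
  have hS : ∀ l ∈ N, (l ∈ S ↔ l ∈ ha) := fun l hl => by
    have hlA : l ∉ A := fun hlA => (mem_sdiff.1 (hA hlA)).2 hl
    simp [S, hl, hlA, Finmap.mem_keys]
  have hanon : (h₂.keys \ N).filter (· ∈ S) = A := by
    ext l
    have := @hA l
    simp only [S, mem_sdiff, mem_filter, mem_union, mem_inter] at this ⊢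
    tauto
  refine ⟨h₂.restrict (· ∈ S), h₂.restrict (· ∉ S), fun l h₁l h₂l => ?_,
    (h₂.restrict_union_restrict_not _).symm, ⟨?_, ?_⟩, ⟨?_, ?_⟩⟩
  · rw [← Finmap.mem_keys, Heap.keys_restrict, mem_filter] at h₁l h₂l
    exact h₂l.2 h₁l.2
  · exact rel_lookup_restrict he.1 (fun l hl => (hS l hl).2)
      fun l hl hlb hlS => hd l ((hS l hl).1 hlS) hlb
  · rw [Heap.keys_restrict_sdiff, hanon, hAcard, hpa]
  · exact rel_lookup_restrict (Finmap.union_comm_of_disjoint hd ▸ he.1)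
      (fun l hl hlb hlS => hd l ((hS l hl).1 hlS) hlb) fun l hl hla => not_not.2 ((hS l hl).2 hla)
  · rw [Heap.keys_restrict_sdiff, filter_not, hanon, card_sdiff_of_subset hA, hAcard, hqb]
    congr 1
    omega

end HeapEquiv

theorem STerm.eval_congr {sx : ℕ → SVal} {sa sa' : ℕ → Word} (t : STerm)
    (h : ∀ a ∈ t.fva, sa a = sa' a) : t.eval sx sa = t.eval sx sa' := by
  induction t with
  | eps | atom => rfl
  | svar a => exact h a (mem_singleton_self a)
  | conc t₁ t₂ ih₁ ih₂ =>
    simp only [fva, mem_union, or_imp, forall_and] at h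
    rw [eval, eval, ih₁ h.1, ih₂ h.2]

def PFormula.HeapEquivInvariant (sx : ℕ → SVal) (sa : ℕ → Word) (N : Finset ℕ) (V : Set Word)
    (φ : PFormula) : Prop :=
  ∀ ⦃h₁ h₂ : Heap⦄, HeapEquiv N V φ.sz h₁ h₂ → φ.Sat sx sa h₁ → φ.Sat sx sa h₂

namespace PFormula

variable {sx : ℕ → SVal} {sa : ℕ → Word} {N : Finset ℕ} {V : Set Word} {φa φb : PFormula}

theorem heapEquivInvariant_imp (ha : φa.HeapEquivInvariant sx sa N V)
    (hb : φb.HeapEquivInvariant sx sa N V) : (φa.imp φb).HeapEquivInvariant sx sa N V :=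
  fun _ _ he hs hsa =>
    hb (he.mono (le_max_right _ _)) (hs (ha (he.mono (le_max_left _ _)).symm hsa))

theorem heapEquivInvariant_emp : emp.HeapEquivInvariant sx sa N V := by
  rintro h₁ h₂ he (rfl : h₁ = ∅)
  exact he.eq_of_keys_subset (by simp) (by simp)

theorem heapEquivInvariant_pto {x : ℕ} {t : STerm} (hx : ∀ l, sx x = .inl l → l ∈ N)
    (ht : t.eval sx sa ∈ V) : (pto x t).HeapEquivInvariant sx sa N V := by
  rintro h₁ h₂ he ⟨l, hxl, rfl⟩
  refine ⟨l, hxl, he.eq_of_keys_subset (by simpa using hx l hxl) fun l' v hv => ?_⟩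
  obtain rfl : l' = l := (Finmap.mem_singleton _ _ _).1 (Finmap.mem_of_lookup_eq_some hv)
  rw [Finmap.lookup_singleton_eq] at hv
  exact Option.some_injective _ hv ▸ ht

theorem heapEquivInvariant_star (ha : φa.HeapEquivInvariant sx sa N V)
    (hb : φb.HeapEquivInvariant sx sa N V) : (φa.star φb).HeapEquivInvariant sx sa N V := by
  rintro h₁ h₂ he ⟨ga, gb, hd, rfl, hsa, hsb⟩
  obtain ⟨ka, kb, hk, rfl, hea, heb⟩ := he.exists_split hd
  exact ⟨ka, kb, hk, rfl, ha hea hsa, hb heb hsb⟩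

theorem heapEquivInvariant_wand (ha : φa.HeapEquivInvariant sx sa N V)
    (hb : φb.HeapEquivInvariant sx sa N V) : (φa.wand φb).HeapEquivInvariant sx sa N V := by
  intro h₁ h₂ he hs h' hd₂ hsa
  -- Move the anonymous cells of `h'` away from `h₁`; `φa` and `φb` cannot notice.
  obtain ⟨A, hA, hAcard⟩ := exists_disjoint_card_eq (N ∪ h₁.keys) (h'.keys \ N).card
  have he' : ∀ n, HeapEquiv N V n h' (h'.relocate N A id) := fun n =>
    heapEquiv_relocate h' (disjoint_union_right.1 hA).1 WordEquiv.refl (by rw [hAcard])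
  have hd₁ : (h'.relocate N A id).Disjoint h₁ := by
    intro l hl hl₁
    rw [← Finmap.mem_keys, Heap.keys_relocate, mem_union, mem_inter, Finmap.mem_keys] at hl
    rcases hl with ⟨hl', hlN⟩ | hlA
    · exact hd₂ l hl' ((he.mem_iff hlN).1 hl₁)
    · exact disjoint_left.1 hA hlA (mem_union_right _ (Finmap.mem_keys.2 hl₁))
  exact hb ((he' _).symm.union hd₁ hd₂ he) (hs _ hd₁ (ha (he' _) hsa))

theorem heapEquivInvariant (φ : PFormula) (hN : ∀ x ∈ φ.fvx, ∀ l, sx x = .inl l → l ∈ N)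
    (hV : ∀ t ∈ φ.seqTerms, t.eval sx sa ∈ V) : φ.HeapEquivInvariant sx sa N V := by
  induction φ with
  | eqx | eqs | fls => exact fun _ _ _ hs => hs
  | emp => exact heapEquivInvariant_emp
  | pto x t =>
    exact heapEquivInvariant_pto (hN x (by simp [fvx])) (hV t (by simp [seqTerms]))
  | imp φa φb iha ihb =>
    simp only [fvx, seqTerms, mem_union, or_imp, forall_and] at hN hV
    exact heapEquivInvariant_imp (iha hN.1 hV.1) (ihb hN.2 hV.2)
  | star φa φb iha ihb =>
    simp only [fvx, seqTerms, mem_union, or_imp, forall_and] at hN hV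
    exact heapEquivInvariant_star (iha hN.1 hV.1) (ihb hN.2 hV.2)
  | wand φa φb iha ihb =>
    simp only [fvx, seqTerms, mem_union, or_imp, forall_and] at hN hV
    exact heapEquivInvariant_wand (iha hN.1 hV.1) (ihb hN.2 hV.2)

theorem sat_congr {sa' : ℕ → Word} (φ : PFormula) (h : ∀ a ∈ φ.fva, sa a = sa' a) :
    φ.Sat sx sa = φ.Sat sx sa' := by
  induction φ with
  | eqx | fls | emp => rfl
  | eqs t₁ t₂ =>
    simp only [fva, mem_union, or_imp, forall_and] at h
    funext
    simp only [Sat, t₁.eval_congr h.1, t₂.eval_congr h.2]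
  | pto x t =>
    funext
    simp only [Sat, t.eval_congr h]
  | imp φa φb iha ihb =>
    simp only [fva, mem_union, or_imp, forall_and] at h
    funext
    simp only [Sat, iha h.1, ihb h.2]
  | star φa φb iha ihb =>
    simp only [fva, mem_union, or_imp, forall_and] at h
    funext
    simp only [Sat, iha h.1, ihb h.2]
  | wand φa φb iha ihb =>
    simp only [fva, mem_union, or_imp, forall_and] at h
    funext
    simp only [Sat, iha h.1, ihb h.2]

end PFormula

theorem exists_heapEquiv_small (N : Finset ℕ) {V : Set Word} {w : Word} (hw : w ∉ V) (k : ℕ)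
    {h₁ h : Heap} (hd : h₁.Disjoint h) :
    ∃ h₂ : Heap, HeapEquiv N V k h₁ h₂ ∧ h₂.Disjoint h ∧
      (∀ l ∈ h₂.keys, l ∈ firstN {l | l ∉ h.keys ∧ l ∉ N} k ∨ l ∈ N) ∧
      ∀ l v, h₂.lookup l = some v → v ∈ V ∨ v = w := by
  classical
  have hinf : {l | l ∉ h.keys ∧ l ∉ N}.Infinite :=
    (h.keys ∪ N).finite_toSet.infinite_compl.mono fun l hl => by simpa [not_or] using hl
  obtain ⟨F, hFcard, hF⟩ := exists_finset_subset_firstN hinf (min_le_left k (h₁.keys \ N).card)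
  have hF' : ∀ l ∈ F, l ∉ h.keys ∧ l ∉ N := fun l hl => (hF hl).1
  refine ⟨h₁.relocate N F fun v => if v ∈ V then v else w, ?_, ?_, ?_, ?_⟩
  · refine heapEquiv_relocate h₁ (disjoint_left.2 fun l hl => (hF' l hl).2) (fun v => ?_) ?_
    · by_cases hv : v ∈ V
      · simp [hv, WordEquiv.refl]
      · exact Or.inr ⟨hv, by simpa [hv] using hw⟩
    · rw [hFcard]
      omega
  · intro l hl hlh
    rw [← Finmap.mem_keys, Heap.keys_relocate, mem_union, mem_inter, Finmap.mem_keys] at hl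
    rcases hl with ⟨hl₁, -⟩ | hlF
    · exact hd l hl₁ hlh
    · exact (hF' l hlF).1 (Finmap.mem_keys.2 hlh)
  · intro l hl
    rw [Heap.keys_relocate, mem_union, mem_inter] at hl
    exact hl.elim (fun hl => Or.inr hl.2) fun hlF => Or.inl (hF hlF)
  · intro l v hl
    obtain ⟨u, rfl⟩ := h₁.exists_eq_of_lookup_relocate hl
    by_cases hu : u ∈ V <;> simp [hu]

noncomputable def namedLocs (sx : ℕ → SVal) (L : Finset ℕ) : Finset ℕ :=
  (L.image sx).preimage Sum.inl Sum.inl_injective.injOn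

theorem mem_namedLocs {sx : ℕ → SVal} {L : Finset ℕ} {l : ℕ} :
    l ∈ namedLocs sx L ↔ ∃ x ∈ L, sx x = Sum.inl l := by
  simp [namedLocs]

/-- Small model property of separating implication.  Here `sa'` extends `sa`
by assigning to the fresh sequence variable `βbar` a word `w` different from
the value of every sequence term of `φ₁ -* φ₂`; the set `D` is
`B ∪ sx(L)` where `L = FV_x(φ₁) ∪ FV_x(φ₂)` and `B` consists of the first
`max(sz φ₁, sz φ₂)` locations outside `dom(h) ∪ sx(L)`, and the range `R`
consists of the values of the sequence terms of `φ₁ -* φ₂` together with `ε`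
and `w = sa'(βbar)`. -/
theorem small_model_property_of_wand
    (sx : ℕ → SVal) (sa : ℕ → Word) (h : Heap) (φ₁ φ₂ : PFormula)
    (βbar : ℕ) (hfresh : βbar ∉ (φ₁.wand φ₂).fva)
    (w : Word) (sa' : ℕ → Word) (hsa' : sa' = Function.update sa βbar w)
    (hw : ∀ t ∈ (φ₁.wand φ₂).seqTerms, STerm.eval sx sa' t ≠ w) :
    PFormula.Sat sx sa (φ₁.wand φ₂) h ↔
      ∀ h' : Heap, h'.Disjoint h → PFormula.Sat sx sa' φ₁ h' →
        (∀ l ∈ h'.keys,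
          l ∈ firstN
    {l' : ℕ | l' ∉ h.keys ∧ ∀ x ∈ φ₁.fvx ∪ φ₂.fvx, sx x ≠ Sum.inl l'}
                (max φ₁.sz φ₂.sz) ∨
          ∃ x ∈ φ₁.fvx ∪ φ₂.fvx, sx x = Sum.inl l) →
        (∀ (l : ℕ) (w' : Word), h'.lookup l = some w' →
          (∃ t ∈ (φ₁.wand φ₂).seqTerms, STerm.eval sx sa' t = w') ∨
            w' = [] ∨ w' = w) →
        PFormula.Sat sx sa' φ₂ (h' ∪ h) := by
  set N := namedLocs sx (φ₁.fvx ∪ φ₂.fvx)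
  set V : Set Word := {v | ∃ t ∈ (φ₁.wand φ₂).seqTerms, STerm.eval sx sa' t = v}
  have hinv : ∀ φ : PFormula, φ.fvx ⊆ φ₁.fvx ∪ φ₂.fvx → φ.seqTerms ⊆ (φ₁.wand φ₂).seqTerms →
      φ.HeapEquivInvariant sx sa' N V := fun φ hφN hφV =>
    φ.heapEquivInvariant (fun x hx _ hxl => mem_namedLocs.2 ⟨x, hφN hx, hxl⟩)
      fun t ht => ⟨t, hφV ht, rfl⟩
  have hS : {l' : ℕ | l' ∉ h.keys ∧ ∀ x ∈ φ₁.fvx ∪ φ₂.fvx, sx x ≠ Sum.inl l'} =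
      {l | l ∉ h.keys ∧ l ∉ N} := by
    simp [N, mem_namedLocs]
  rw [hS, PFormula.sat_congr (sa' := sa') _ fun a ha => by
    rw [hsa', Function.update_of_ne (ne_of_mem_of_not_mem ha hfresh)]]
  refine ⟨fun hs h' hd hs' _ _ => hs h' hd hs', fun hR h₁ hd hs₁ => ?_⟩
  obtain ⟨h₂, he, hd₂, hdom, hrange⟩ :=
    exists_heapEquiv_small N (V := V) (fun ⟨t, ht, htw⟩ => hw t ht htw) (max φ₁.sz φ₂.sz) hd
  refine hinv φ₂ subset_union_right subset_union_right
    ((he.mono (le_max_right _ _)).union hd hd₂ (.refl _ h)).symm (hR h₂ hd₂ ?_ ?_ ?_)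
  · exact hinv φ₁ subset_union_left subset_union_left (he.mono (le_max_left _ _)) hs₁
  · exact fun l hl => (hdom l hl).imp_right mem_namedLocs.1
  · exact fun l v hl => (hrange l v hl).imp_right Or.inr
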